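/- arXiv:1802.07645 — 3 statements merged into one kernel-verified Lean document; each statement's English description precedes it below -/
import Mathlib

section
/- (Intermediate state for equal velocities.) Let u₀ ∈ ℝ, 0 < ρ_r < ρ_l, and ε > 0. Define u₁ : [ρ_r, ρ_l] → ℝ by u₁(ρ) = u₀ + ∫_ρ^{ρ_l} √(ε·p′(ξ)/ξ) dξ = u₀ + √ε·∫_ρ^{ρ_l} e^{ξ/2} dξ (the 1-rarefaction curve through (u₀, ρ_l)), and let u₂ : [ρ_r, ρ_l] → ℝ be the function with u₂(ρ) ≥ u₀ and (u₂(ρ) − u₀)² = 2ε·((ρ − ρ_r)/(ρ + ρ_r))·(p(ρ) − p(ρ_r)) (the admissible 2-shock curve ending at (u₀, ρ_r)). Then there exists a unique ρ* ∈ (ρ_r, ρ_l) such that u₁(ρ*) = u₂(ρ*). -/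
/-!
The 1-rarefaction curve `u₁ = u₀ + 2√ε (e^{ρ_l/2} - e^{ρ/2})` is continuous and strictly
decreasing in `ρ`, while the 2-shock curve `u₂ = u₀ + √(2ε (ρ-ρ_r)/(ρ+ρ_r) (p ρ - p ρ_r))` is
continuous and strictly increasing, being the square root of a product of two nonnegative
strictly increasing factors. Their difference is positive at `ρ_r` (where `u₂ = u₀ < u₁`) and
negative at `ρ_l` (where `u₁ = u₀ < u₂`), so it has exactly one zero in between.
-/

open Real Filter Topology

noncomputable def p (ρ : ℝ) : ℝ := ∫ ξ in (0:ℝ)..ρ, ξ * Real.exp ξ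

lemma hasDerivAt_p (x : ℝ) : HasDerivAt p (x * exp x) x :=
  ((continuous_id.mul continuous_exp).integral_hasStrictDerivAt 0 x).hasDerivAt

@[fun_prop]
lemma continuous_p : Continuous p :=
  continuous_iff_continuousAt.mpr fun x ↦ (hasDerivAt_p x).continuousAt

lemma strictMonoOn_p : StrictMonoOn p (Set.Ici 0) := by
  refine strictMonoOn_of_deriv_pos (convex_Ici 0) continuous_p.continuousOn fun x hx ↦ ?_
  rw [interior_Ici] at hx
  rw [(hasDerivAt_p x).deriv]
  exact mul_pos hx (exp_pos x)

lemma integral_sqrt_mul_mul_exp_div (ε a b : ℝ) :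
    ∫ ξ in a..b, √(ε * (ξ * exp ξ) / ξ) = 2 * √ε * (exp (b / 2) - exp (a / 2)) := by
  -- equality off `ξ = 0`, where the division takes its junk value
  have hae : ∀ᵐ ξ ∂MeasureTheory.volume, ξ ∈ Set.uIoc a b →
      √(ε * (ξ * exp ξ) / ξ) = √ε * exp (ξ / 2) := by
    filter_upwards [MeasureTheory.measure_eq_zero_iff_ae_notMem.mp
      (MeasureTheory.measure_singleton (0 : ℝ))] with ξ hξ _
    rw [mul_div_assoc, mul_div_cancel_left₀ _ hξ, sqrt_mul' ε (exp_pos ξ).le, exp_half]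
  rw [intervalIntegral.integral_congr_ae hae, intervalIntegral.integral_const_mul,
    intervalIntegral.integral_comp_div _ two_ne_zero, integral_exp, smul_eq_mul]
  ring

lemma strictMonoOn_sub_div_add {c : ℝ} (hc : 0 < c) :
    StrictMonoOn (fun x ↦ (x - c) / (x + c)) (Set.Ici c) := by
  intro x hx y hy hxy
  simp only [Set.mem_Ici] at hx hy
  rw [div_lt_div_iff₀ (by linarith) (by linarith)]
  nlinarith

lemma strictMonoOn_sub_div_add_mul_p_sub {c : ℝ} (hc : 0 < c) :
    StrictMonoOn (fun x ↦ (x - c) / (x + c) * (p x - p c)) (Set.Ici c) := by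
  intro x hx y hy hxy
  have hc' : c ∈ Set.Ici (0 : ℝ) := hc.le
  have hmem : ∀ {z}, z ∈ Set.Ici c → z ∈ Set.Ici (0 : ℝ) := fun hz ↦ hc.le.trans hz
  have hfx : 0 ≤ (x - c) / (x + c) := div_nonneg (by linarith [hx.out]) (by linarith [hx.out])
  have hgy : 0 < p y - p c := sub_pos.mpr (strictMonoOn_p hc' (hmem hy) (hx.out.trans_lt hxy))
  calc (x - c) / (x + c) * (p x - p c)
      ≤ (x - c) / (x + c) * (p y - p c) := by
        gcongr
        exact strictMonoOn_p.monotoneOn (hmem hx) (hmem hy) hxy.le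
    _ < (y - c) / (y + c) * (p y - p c) :=
        mul_lt_mul_of_pos_right (strictMonoOn_sub_div_add hc hx hy hxy) hgy

noncomputable def rarefactionCurve (ε ρl ρ : ℝ) : ℝ := 2 * √ε * (exp (ρl / 2) - exp (ρ / 2))

noncomputable def shockCurve (ε ρr ρ : ℝ) : ℝ :=
  √(2 * ε * ((ρ - ρr) / (ρ + ρr)) * (p ρ - p ρr))

lemma rarefactionCurve_self (ε ρl : ℝ) : rarefactionCurve ε ρl ρl = 0 := by
  simp [rarefactionCurve]

lemma continuous_rarefactionCurve (ε ρl : ℝ) : Continuous (rarefactionCurve ε ρl) := by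
  unfold rarefactionCurve
  fun_prop

lemma strictAnti_rarefactionCurve {ε : ℝ} (hε : 0 < ε) (ρl : ℝ) :
    StrictAnti (rarefactionCurve ε ρl) := fun x y hxy ↦ by
  have hexp : exp (x / 2) < exp (y / 2) := exp_lt_exp.mpr (by linarith)
  unfold rarefactionCurve
  gcongr

lemma shockCurve_self (ε ρr : ℝ) : shockCurve ε ρr ρr = 0 := by
  simp [shockCurve]

lemma continuousOn_shockCurve (ε : ℝ) {ρr : ℝ} (hρr : 0 < ρr) :
    ContinuousOn (shockCurve ε ρr) (Set.Ici ρr) := by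
  have : ∀ x ∈ Set.Ici ρr, x + ρr ≠ 0 := fun x hx ↦ by linarith [hx.out]
  unfold shockCurve
  fun_prop (disch := assumption)

lemma strictMonoOn_shockCurve {ε ρr : ℝ} (hε : 0 < ε) (hρr : 0 < ρr) :
    StrictMonoOn (shockCurve ε ρr) (Set.Ici ρr) := by
  intro x hx y hy hxy
  have hx_nonneg :=
    (strictMonoOn_sub_div_add_mul_p_sub hρr).monotoneOn (Set.mem_Ici.mpr le_rfl) hx hx.out
  simp only [sub_self, zero_div, zero_mul] at hx_nonneg
  unfold shockCurve
  rw [mul_assoc (2 * ε), mul_assoc (2 * ε)]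
  exact sqrt_lt_sqrt (mul_nonneg (by positivity) hx_nonneg)
    (mul_lt_mul_of_pos_left (strictMonoOn_sub_div_add_mul_p_sub hρr hx hy hxy) (by positivity))

lemma existsUnique_mem_Ioo_eq_of_strictAntiOn_of_monotoneOn {f g : ℝ → ℝ} {a b : ℝ}
    (hab : a ≤ b) (hf : ContinuousOn f (Set.Icc a b)) (hg : ContinuousOn g (Set.Icc a b))
    (hf_anti : StrictAntiOn f (Set.Icc a b)) (hg_mono : MonotoneOn g (Set.Icc a b))
    (ha : g a < f a) (hb : f b < g b) :
    ∃! x, x ∈ Set.Ioo a b ∧ f x = g x := by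
  have hanti : StrictAntiOn (f - g) (Set.Icc a b) := fun x hx y hy hxy ↦ by
    simp only [Pi.sub_apply]
    linarith [hf_anti hx hy hxy, hg_mono hx hy hxy.le]
  obtain ⟨x, hx, hfx⟩ := intermediate_value_Ioo' hab (hf.sub hg)
    ⟨sub_neg.mpr hb, sub_pos.mpr ha⟩
  refine ⟨x, ⟨hx, sub_eq_zero.mp hfx⟩, fun y ⟨hy, hfy⟩ ↦ ?_⟩
  refine hanti.injOn (Set.Ioo_subset_Icc_self hy) (Set.Ioo_subset_Icc_self hx) ?_
  rw [hfx, Pi.sub_apply, hfy, sub_self]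

/-- Intermediate state for equal velocities: the 1-rarefaction curve through `(u₀, ρ_l)`
and the admissible 2-shock curve ending at `(u₀, ρ_r)` intersect at a unique
`ρ* ∈ (ρ_r, ρ_l)`. -/
theorem stmt16 (u0 ρr ρl ε : ℝ) (hρr : 0 < ρr) (hlt : ρr < ρl) (hε : 0 < ε)
    (u₁ u₂ : ℝ → ℝ)
    (hu₁ : ∀ ρ ∈ Set.Icc ρr ρl,
      u₁ ρ = u0 + ∫ ξ in ρ..ρl, Real.sqrt (ε * (ξ * Real.exp ξ) / ξ))
    (hu₂ : ∀ ρ ∈ Set.Icc ρr ρl, u0 ≤ u₂ ρ ∧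
      (u₂ ρ - u0) ^ 2 = 2 * ε * ((ρ - ρr) / (ρ + ρr)) * (p ρ - p ρr)) :
    ∃! ρstar : ℝ, ρstar ∈ Set.Ioo ρr ρl ∧ u₁ ρstar = u₂ ρstar := by
  have hu₁_eq : ∀ ρ ∈ Set.Icc ρr ρl, u₁ ρ = u0 + rarefactionCurve ε ρl ρ := fun ρ hρ ↦ by
    rw [hu₁ ρ hρ, integral_sqrt_mul_mul_exp_div, rarefactionCurve]
  have hu₂_eq : ∀ ρ ∈ Set.Icc ρr ρl, u₂ ρ = u0 + shockCurve ε ρr ρ := fun ρ hρ ↦ by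
    obtain ⟨hle, hsq⟩ := hu₂ ρ hρ
    rw [shockCurve, ← hsq, sqrt_sq (sub_nonneg.mpr hle), add_sub_cancel]
  have hshock : StrictMonoOn (shockCurve ε ρr) (Set.Icc ρr ρl) :=
    (strictMonoOn_shockCurve hε hρr).mono Set.Icc_subset_Ici_self
  have hcross : ∃! ρ, ρ ∈ Set.Ioo ρr ρl ∧ rarefactionCurve ε ρl ρ = shockCurve ε ρr ρ := by
    refine existsUnique_mem_Ioo_eq_of_strictAntiOn_of_monotoneOn hlt.le
      (continuous_rarefactionCurve ε ρl).continuousOn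
      ((continuousOn_shockCurve ε hρr).mono Set.Icc_subset_Ici_self)
      ((strictAnti_rarefactionCurve hε ρl).strictAntiOn _) hshock.monotoneOn ?_ ?_
    · rw [shockCurve_self, ← rarefactionCurve_self ε ρl]
      exact strictAnti_rarefactionCurve hε ρl hlt
    · rw [rarefactionCurve_self, ← shockCurve_self ε ρr]
      exact hshock (Set.left_mem_Icc.mpr hlt.le) (Set.right_mem_Icc.mpr hlt.le) hlt
  refine (existsUnique_congr fun ρ ↦ and_congr_right fun hρ ↦ ?_).mpr hcross
  rw [hu₁_eq ρ (Set.Ioo_subset_Icc_self hρ), hu₂_eq ρ (Set.Ioo_subset_Icc_self hρ),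
    add_right_inj]
end

section
/- Let u_l ∈ ℝ and 0 < ρ_r < ρ_l. Suppose for each ε in some interval (0, η) the pair (u*_ε, ρ*_ε) satisfies ρ_r < ρ*_ε < ρ_l and (u*_ε − u_l)²·(ρ*_ε + ρ_r)/2 = ε·(ρ*_ε − ρ_r)·(p(ρ*_ε) − p(ρ_r)). Then u*_ε → u_l as ε → 0⁺. (Consequently, in the case u_l = u_r the Riemann solutions of the perturbed system converge to the contact-type solution u ≡ u_l, ρ = ρ_l for x < u_l t and ρ = ρ_r for x > u_l t.) -/
/-! The shock relation forces `(u*_ε - u_l)² ≤ C ε` with `C` independent of `ε`, because `ρ*_ε`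
stays in `(ρ_r, ρ_l)` and `p` is monotone there; hence `u*_ε → u_l`. -/

open Real Filter Topology

lemma monotoneOn_p : MonotoneOn p (Set.Ici 0) := by
  intro a ha b _ hab
  have hcont : Continuous fun ξ : ℝ => ξ * Real.exp ξ := by fun_prop
  have hsplit : p a + ∫ ξ in a..b, ξ * Real.exp ξ = p b :=
    intervalIntegral.integral_add_adjacent_intervals
      (hcont.intervalIntegrable _ _) (hcont.intervalIntegrable _ _)
  have hnonneg : 0 ≤ ∫ ξ in a..b, ξ * Real.exp ξ :=
    intervalIntegral.integral_nonneg hab fun x hx =>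
      mul_nonneg (le_trans (Set.mem_Ici.mp ha) hx.1) (Real.exp_pos x).le
  linarith

lemma sq_sub_le_of_shock_relation {P : ℝ → ℝ} {u ul ρ ρl ρr ε : ℝ}
    (hP : MonotoneOn P (Set.Icc ρr ρl)) (hρr : 0 < ρr) (hρ : ρ ∈ Set.Icc ρr ρl) (hε : 0 ≤ ε)
    (heq : (u - ul) ^ 2 * (ρ + ρr) / 2 = ε * (ρ - ρr) * (P ρ - P ρr)) :
    (u - ul) ^ 2 ≤ ρl * (P ρl - P ρr) / ρr * ε := by
  obtain ⟨h1, h2⟩ := hρ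
  have hρl : ρl ∈ Set.Icc ρr ρl := ⟨h1.trans h2, le_rfl⟩
  have hPρ : P ρr ≤ P ρ := hP ⟨le_rfl, h1.trans h2⟩ ⟨h1, h2⟩ h1
  have hPρl : P ρ ≤ P ρl := hP ⟨h1, h2⟩ hρl h2
  rw [div_mul_eq_mul_div, le_div_iff₀ hρr]
  calc (u - ul) ^ 2 * ρr ≤ (u - ul) ^ 2 * (ρ + ρr) / 2 := by nlinarith [sq_nonneg (u - ul)]
    _ = ε * (ρ - ρr) * (P ρ - P ρr) := heq
    _ ≤ ε * ρl * (P ρl - P ρr) := by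
        gcongr
        · exact mul_nonneg hε (by linarith)
        · linarith
    _ = ρl * (P ρl - P ρr) * ε := by ring

lemma tendsto_of_sq_sub_le {α : Type*} {l : Filter α} {u v : α → ℝ} {a : ℝ}
    (hle : ∀ᶠ x in l, (u x - a) ^ 2 ≤ v x) (hv : Tendsto v l (𝓝 0)) :
    Tendsto u l (𝓝 a) := by
  have hsqrt : Tendsto (fun x => √(v x)) l (𝓝 0) := by
    simpa using hv.sqrt
  have hsub : Tendsto (fun x => u x - a) l (𝓝 0) :=
    squeeze_zero_norm' (hle.mono fun x hx => by
      simpa [Real.sqrt_sq_eq_abs] using Real.sqrt_le_sqrt hx) hsqrt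
  simpa using hsub.add_const a

theorem stmt17_general (ul ρl ρr η : ℝ) (hρr : 0 < ρr) (hη : 0 < η)
    (us ρs : ℝ → ℝ)
    (hmem : ∀ ε ∈ Set.Ioo (0:ℝ) η, ρr < ρs ε ∧ ρs ε < ρl)
    (heq : ∀ ε ∈ Set.Ioo (0:ℝ) η,
      (us ε - ul) ^ 2 * (ρs ε + ρr) / 2 = ε * (ρs ε - ρr) * (p (ρs ε) - p ρr)) :
    Tendsto us (𝓝[>] (0:ℝ)) (𝓝 ul) := by
  set C := ρl * (p ρl - p ρr) / ρr
  have hp : MonotoneOn p (Set.Icc ρr ρl) :=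
    monotoneOn_p.mono fun x hx => hρr.le.trans hx.1
  have hbound : ∀ᶠ ε in 𝓝[>] (0:ℝ), (us ε - ul) ^ 2 ≤ C * ε := by
    filter_upwards [Ioo_mem_nhdsGT hη] with ε hε
    obtain ⟨h1, h2⟩ := hmem ε hε
    exact sq_sub_le_of_shock_relation hp hρr ⟨h1.le, h2.le⟩ hε.1.le (heq ε hε)
  have hlin : Tendsto (fun ε => C * ε) (𝓝[>] (0:ℝ)) (𝓝 0) := by
    simpa using ((continuous_const_mul C).tendsto 0).mono_left nhdsWithin_le_nhds
  exact tendsto_of_sq_sub_le hbound hlin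

/-- If `ρ_r < ρ*_ε < ρ_l` and `(u*_ε − u_l)²·(ρ*_ε + ρ_r)/2 = ε·(ρ*_ε − ρ_r)·(p(ρ*_ε) −
p(ρ_r))` for all `ε ∈ (0, η)`, then `u*_ε → u_l` as `ε → 0⁺`. -/
theorem stmt17 (ul ρl ρr η : ℝ) (hρr : 0 < ρr) (hlt : ρr < ρl) (hη : 0 < η)
    (us ρs : ℝ → ℝ)
    (hmem : ∀ ε ∈ Set.Ioo (0:ℝ) η, ρr < ρs ε ∧ ρs ε < ρl)
    (heq : ∀ ε ∈ Set.Ioo (0:ℝ) η,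
      (us ε - ul) ^ 2 * (ρs ε + ρr) / 2 = ε * (ρs ε - ρr) * (p (ρs ε) - p ρr)) :
    Tendsto us (𝓝[>] (0:ℝ)) (𝓝 ul) :=
  stmt17_general ul ρl ρr η hρr hη us ρs hmem heq
end

section
/- (Limit for the flux-shift approximation, rarefaction case.) Let u_l < u_r and ρ_l, ρ_r > 0. For ε > 0 define on ℝ × (0,∞): u^ε(x,t) = u_l if x < (u_l + ε)t, u^ε(x,t) = x/t − ε if (u_l + ε)t < x < (u_r + ε)t, u^ε(x,t) = u_r if x > (u_r + ε)t; and ρ^ε(x,t) = ρ_l if x < u_l t, ρ^ε(x,t) = ρ_r·exp((u_l − u_r)/ε) if u_l t < x < (u_l + ε)t, ρ^ε(x,t) = ρ_r·exp((x/t − (u_r + ε))/ε) if (u_l + ε)t < x < (u_r + ε)t, and ρ^ε(x,t) = ρ_r if x > (u_r + ε)t. Then as ε → 0⁺, (u^ε, ρ^ε) converges in the sense of distributions on ℝ × (0,∞) (i.e., tested against every φ ∈ C_c^∞(ℝ × (0,∞))) to (u, ρ) given by: u(x,t) = u_l for x < u_l t, u(x,t) = x/t for u_l t < x < u_r t, u(x,t)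 = u_r for x > u_r t; and ρ(x,t) = ρ_l for x < u_l t, ρ(x,t) = 0 for u_l t < x < u_r t, ρ(x,t) = ρ_r for x > u_r t. -/
open Real Filter Topology MeasureTheory

private lemma dct_helper (c1 c2 : ℝ) (φ : ℝ × ℝ → ℝ) (hφ : Continuous φ)
    (hcs : HasCompactSupport φ)
    (F : ℝ → ℝ → ℝ → ℝ) (L : ℝ → ℝ → ℝ) (C : ℝ)
    (hmeas : ∀ ε : ℝ, Measurable fun p : ℝ × ℝ => F ε p.1 p.2)
    (hmeasL : Measurable fun p : ℝ × ℝ => L p.1 p.2)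
    (hbound : ∀ ε > (0:ℝ), ∀ t > (0:ℝ), ∀ x : ℝ, |F ε t x| ≤ C)
    (hboundL : ∀ t > (0:ℝ), ∀ x : ℝ, |L t x| ≤ C)
    (hconv : ∀ t > (0:ℝ), ∀ x : ℝ, x ≠ c1 * t → x ≠ c2 * t →
      Tendsto (fun ε => F ε t x) (𝓝[>] (0:ℝ)) (𝓝 (L t x))) :
    Tendsto (fun ε => ∫ t in Set.Ioi (0:ℝ), ∫ x : ℝ, F ε t x * φ (x, t))
      (𝓝[>] (0:ℝ))
      (𝓝 (∫ t in Set.Ioi (0:ℝ), ∫ x : ℝ, L t x * φ (x, t))) := by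
  set μ : Measure (ℝ × ℝ) := (volume.restrict (Set.Ioi (0:ℝ))).prod volume with hμ
  have hφsw_cont : Continuous fun p : ℝ × ℝ => φ (p.2, p.1) := hφ.comp continuous_swap
  have hφsw_cs : HasCompactSupport fun p : ℝ × ℝ => φ (p.2, p.1) :=
    hcs.comp_homeomorph (Homeomorph.prodComm ℝ ℝ)
  have hφsw_int : Integrable (fun p : ℝ × ℝ => φ (p.2, p.1)) μ := by
    have h1 : Integrable (fun p : ℝ × ℝ => φ (p.2, p.1)) (volume : Measure (ℝ × ℝ)) :=
      hφsw_cont.integrable_of_hasCompactSupport hφsw_cs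
    rw [hμ, Measure.restrict_prod_eq_prod_univ, ← Measure.volume_eq_prod]
    exact h1.restrict
  have hg_int : Integrable (fun p : ℝ × ℝ => C * |φ (p.2, p.1)|) μ := by
    simpa [Real.norm_eq_abs] using hφsw_int.norm.const_mul C
  have h_ae_t : ∀ᵐ p : ℝ × ℝ ∂μ, 0 < p.1 := by
    rw [ae_iff]
    have hset : {p : ℝ × ℝ | ¬ 0 < p.1} = Set.Iic (0:ℝ) ×ˢ Set.univ := by
      ext p; simp [not_lt]
    have hIic : Set.Iic (0:ℝ) ∩ Set.Ioi (0:ℝ) = ∅ := by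
      ext x; simp only [Set.mem_inter_iff, Set.mem_Iic, Set.mem_Ioi, Set.mem_empty_iff_false,
        iff_false, not_and, not_lt]
      exact fun h => h
    rw [hμ, hset, Measure.prod_prod, Measure.restrict_apply measurableSet_Iic, hIic]
    simp
  have hline : ∀ c : ℝ, ∀ᵐ p : ℝ × ℝ ∂μ, p.2 ≠ c * p.1 := by
    intro c
    rw [ae_iff]
    have hSeq : {p : ℝ × ℝ | ¬ p.2 ≠ c * p.1} = {p : ℝ × ℝ | p.2 = c * p.1} := by
      ext p; simp
    have hS : MeasurableSet {p : ℝ × ℝ | p.2 = c * p.1} :=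
      measurableSet_eq_fun measurable_snd (measurable_fst.const_mul c)
    rw [hSeq, hμ, Measure.measure_prod_null hS]
    refine Filter.Eventually.of_forall fun t => ?_
    have hpre : Prod.mk t ⁻¹' {p : ℝ × ℝ | p.2 = c * p.1} = {c * t} := by
      ext x; simp [Set.mem_preimage]
    simp [hpre]
  have hintF : ∀ ε ∈ Set.Ioi (0:ℝ),
      Integrable (fun p : ℝ × ℝ => F ε p.1 p.2 * φ (p.2, p.1)) μ := by
    intro ε hε
    refine hg_int.mono' ((hmeas ε).mul hφsw_cont.measurable).aestronglyMeasurable ?_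
    filter_upwards [h_ae_t] with p hp
    rw [Real.norm_eq_abs, abs_mul]
    exact mul_le_mul_of_nonneg_right (hbound ε hε p.1 hp p.2) (abs_nonneg _)
  have hintL : Integrable (fun p : ℝ × ℝ => L p.1 p.2 * φ (p.2, p.1)) μ := by
    refine hg_int.mono' (hmeasL.mul hφsw_cont.measurable).aestronglyMeasurable ?_
    filter_upwards [h_ae_t] with p hp
    rw [Real.norm_eq_abs, abs_mul]
    exact mul_le_mul_of_nonneg_right (hboundL p.1 hp p.2) (abs_nonneg _)
  have key : Tendsto (fun ε => ∫ p, F ε p.1 p.2 * φ (p.2, p.1) ∂μ) (𝓝[>] (0:ℝ))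
      (𝓝 (∫ p, L p.1 p.2 * φ (p.2, p.1) ∂μ)) := by
    refine tendsto_integral_filter_of_dominated_convergence
      (fun p => C * |φ (p.2, p.1)|) ?_ ?_ hg_int ?_
    · exact Filter.Eventually.of_forall fun ε =>
        ((hmeas ε).mul hφsw_cont.measurable).aestronglyMeasurable
    · filter_upwards [self_mem_nhdsWithin] with ε hε
      filter_upwards [h_ae_t] with p hp
      rw [Real.norm_eq_abs, abs_mul]
      exact mul_le_mul_of_nonneg_right (hbound ε hε p.1 hp p.2) (abs_nonneg _)
    · filter_upwards [h_ae_t, hline c1, hline c2] with p hp h1 h2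
      exact (hconv p.1 hp p.2 h1 h2).mul_const _
  have eqL : (∫ t in Set.Ioi (0:ℝ), ∫ x : ℝ, L t x * φ (x, t))
      = ∫ p, L p.1 p.2 * φ (p.2, p.1) ∂μ := by
    rw [hμ]
    exact integral_integral (hμ ▸ hintL)
  rw [eqL]
  refine key.congr' ?_
  filter_upwards [self_mem_nhdsWithin] with ε hε
  have eqF : (∫ t in Set.Ioi (0:ℝ), ∫ x : ℝ, F ε t x * φ (x, t))
      = ∫ p, F ε p.1 p.2 * φ (p.2, p.1) ∂μ := by
    rw [hμ]
    exact integral_integral (hμ ▸ hintF ε hε)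
  exact eqF.symm

/-- Limit for the flux-shift approximation (`f(u,ε) = (u+ε)²/2`) in the rarefaction case
`u_l < u_r`: the Riemann solution `(u^ε, ρ^ε)` converges in the sense of distributions
on `ℝ × (0,∞)` to the rarefaction-with-vacuum solution `(u, ρ)`. -/
theorem stmt19 (ul ur ρl ρr : ℝ) (hu : ul < ur) (hρl : 0 < ρl) (hρr : 0 < ρr)
    (φ : ℝ × ℝ → ℝ) (hφ : ContDiff ℝ (⊤ : ℕ∞) φ) (hcs : HasCompactSupport φ)
    (hsupp : tsupport φ ⊆ Set.univ ×ˢ Set.Ioi 0) :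
    Tendsto (fun ε => ∫ t in Set.Ioi (0:ℝ), ∫ x : ℝ,
        (if x < (ul + ε) * t then ul
         else if x < (ur + ε) * t then x / t - ε
         else ur) * φ (x, t))
      (𝓝[>] (0:ℝ))
      (𝓝 (∫ t in Set.Ioi (0:ℝ), ∫ x : ℝ,
        (if x < ul * t then ul else if x < ur * t then x / t else ur) * φ (x, t))) ∧
    Tendsto (fun ε => ∫ t in Set.Ioi (0:ℝ), ∫ x : ℝ,
        (if x < ul * t then ρl
         else if x < (ul + ε) * t then ρr * Real.exp ((ul - ur) / ε)
         else if x < (ur + ε) * t then ρr * Real.exp ((x / t - (ur + ε)) / ε)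
         else ρr) * φ (x, t))
      (𝓝[>] (0:ℝ))
      (𝓝 (∫ t in Set.Ioi (0:ℝ), ∫ x : ℝ,
        (if x < ul * t then ρl else if x < ur * t then 0 else ρr) * φ (x, t))) := by
  constructor
  · -- velocity part
    refine dct_helper ul ur φ hφ.continuous hcs
      (fun ε t x => if x < (ul + ε) * t then ul else if x < (ur + ε) * t then x / t - ε else ur)
      (fun t x => if x < ul * t then ul else if x < ur * t then x / t else ur)
      (|ul| + |ur|) ?_ ?_ ?_ ?_ ?_
    · intro ε
      refine Measurable.ite (measurableSet_lt measurable_snd (measurable_fst.const_mul _))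
        measurable_const ?_
      exact Measurable.ite (measurableSet_lt measurable_snd (measurable_fst.const_mul _))
        ((measurable_snd.div measurable_fst).sub measurable_const) measurable_const
    · refine Measurable.ite (measurableSet_lt measurable_snd (measurable_fst.const_mul _))
        measurable_const ?_
      exact Measurable.ite (measurableSet_lt measurable_snd (measurable_fst.const_mul _))
        (measurable_snd.div measurable_fst) measurable_const
    · intro ε hε t ht x
      beta_reduce
      split_ifs with h1 h2
      · nlinarith [abs_nonneg ur, le_abs_self ul, neg_abs_le ul, abs_nonneg ul]
      · have hl : ul + ε ≤ x / t := (le_div_iff₀ ht).mpr (by linarith [not_lt.1 h1])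
        have hr : x / t < ur + ε := (div_lt_iff₀ ht).mpr h2
        rw [abs_le]
        constructor
        · nlinarith [neg_abs_le ul, abs_nonneg ur]
        · nlinarith [le_abs_self ur, abs_nonneg ul]
      · nlinarith [abs_nonneg ul, le_abs_self ur, neg_abs_le ur, abs_nonneg ur]
    · intro t ht x
      beta_reduce
      split_ifs with h1 h2
      · nlinarith [abs_nonneg ur, le_abs_self ul, neg_abs_le ul, abs_nonneg ul]
      · have hl : ul ≤ x / t := (le_div_iff₀ ht).mpr (by linarith [not_lt.1 h1])
        have hr : x / t < ur := (div_lt_iff₀ ht).mpr h2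
        rw [abs_le]
        constructor
        · nlinarith [neg_abs_le ul, abs_nonneg ur]
        · nlinarith [le_abs_self ur, abs_nonneg ul]
      · nlinarith [abs_nonneg ul, le_abs_self ur, neg_abs_le ur, abs_nonneg ur]
    · intro t ht x h1 h2
      beta_reduce
      rcases lt_trichotomy x (ul * t) with h | h | h
      · rw [if_pos h]
        refine Tendsto.congr' ?_ tendsto_const_nhds
        filter_upwards [self_mem_nhdsWithin] with ε hε
        rw [if_pos (by nlinarith [Set.mem_Ioi.mp hε])]
      · exact absurd h h1
      · rcases lt_trichotomy x (ur * t) with h' | h' | h'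
        · rw [if_neg (not_lt.2 h.le), if_pos h']
          have hδ : (0:ℝ) < (x - ul * t) / t := div_pos (by linarith) ht
          have hT : Tendsto (fun ε : ℝ => x / t - ε) (𝓝[>] (0:ℝ)) (𝓝 (x / t)) := by
            have := (tendsto_const_nhds.sub tendsto_id : Tendsto (fun ε : ℝ => x / t - ε)
              (𝓝 (0:ℝ)) (𝓝 (x / t - 0)))
            rw [sub_zero] at this
            exact this.mono_left nhdsWithin_le_nhds
          refine Tendsto.congr' ?_ hT
          filter_upwards [Ioo_mem_nhdsGT_of_mem (Set.mem_Ico.mpr ⟨le_refl 0, hδ⟩)] with ε hε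
          obtain ⟨hε0, hεδ⟩ := hε
          have hεt : ε * t < x - ul * t := (lt_div_iff₀ ht).mp hεδ
          rw [if_neg (by nlinarith), if_pos (by nlinarith)]
        · exact absurd h' h2
        · rw [if_neg (not_lt.2 h.le), if_neg (not_lt.2 h'.le)]
          have hδ : (0:ℝ) < (x - ur * t) / t := div_pos (by linarith) ht
          refine Tendsto.congr' ?_ tendsto_const_nhds
          filter_upwards [Ioo_mem_nhdsGT_of_mem (Set.mem_Ico.mpr ⟨le_refl 0, hδ⟩)] with ε hε
          obtain ⟨hε0, hεδ⟩ := hε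
          have hεt : ε * t < x - ur * t := (lt_div_iff₀ ht).mp hεδ
          rw [if_neg (by nlinarith), if_neg (by nlinarith)]
  · -- density part
    refine dct_helper ul ur φ hφ.continuous hcs
      (fun ε t x => if x < ul * t then ρl
        else if x < (ul + ε) * t then ρr * Real.exp ((ul - ur) / ε)
        else if x < (ur + ε) * t then ρr * Real.exp ((x / t - (ur + ε)) / ε)
        else ρr)
      (fun t x => if x < ul * t then ρl else if x < ur * t then 0 else ρr)
      (ρl + ρr) ?_ ?_ ?_ ?_ ?_
    · intro ε
      refine Measurable.ite (measurableSet_lt measurable_snd (measurable_fst.const_mul _))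
        measurable_const ?_
      refine Measurable.ite (measurableSet_lt measurable_snd (measurable_fst.const_mul _))
        measurable_const ?_
      refine Measurable.ite (measurableSet_lt measurable_snd (measurable_fst.const_mul _))
        (Measurable.const_mul (Measurable.exp ?_) ρr) measurable_const
      exact ((measurable_snd.div measurable_fst).sub measurable_const).div measurable_const
    · refine Measurable.ite (measurableSet_lt measurable_snd (measurable_fst.const_mul _))
        measurable_const ?_
      exact Measurable.ite (measurableSet_lt measurable_snd (measurable_fst.const_mul _))
        measurable_const measurable_const
    · intro ε hε t ht x
      beta_reduce
      split_ifs with h1 h2 h3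
      · rw [abs_of_pos hρl]; linarith
      · have hexp : Real.exp ((ul - ur) / ε) ≤ 1 :=
          Real.exp_le_one_iff.mpr (div_nonpos_iff.mpr (Or.inr ⟨by linarith, hε.le⟩))
        rw [abs_mul, abs_of_pos hρr, Real.abs_exp]
        nlinarith [Real.exp_pos ((ul - ur) / ε)]
      · have hxt : x / t < ur + ε := (div_lt_iff₀ ht).mpr h3
        have hexp : Real.exp ((x / t - (ur + ε)) / ε) ≤ 1 :=
          Real.exp_le_one_iff.mpr (div_nonpos_iff.mpr (Or.inr ⟨by linarith, hε.le⟩))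
        rw [abs_mul, abs_of_pos hρr, Real.abs_exp]
        nlinarith [Real.exp_pos ((x / t - (ur + ε)) / ε)]
      · rw [abs_of_pos hρr]; linarith
    · intro t ht x
      beta_reduce
      split_ifs
      · rw [abs_of_pos hρl]; linarith
      · rw [abs_zero]; linarith
      · rw [abs_of_pos hρr]; linarith
    · intro t ht x h1 h2
      beta_reduce
      rcases lt_trichotomy x (ul * t) with h | h | h
      · simp only [if_pos h]
        exact tendsto_const_nhds
      · exact absurd h h1
      · rcases lt_trichotomy x (ur * t) with h' | h' | h'
        · rw [if_neg (not_lt.2 h.le), if_pos h']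
          have ha : x / t - ur < 0 := by
            have : x / t < ur := (div_lt_iff₀ ht).mpr h'
            linarith
          have hT : Tendsto (fun ε : ℝ => ρr * Real.exp ((x / t - (ur + ε)) / ε))
              (𝓝[>] (0:ℝ)) (𝓝 0) := by
            have h1' : Tendsto (fun ε : ℝ => (x / t - ur) * ε⁻¹) (𝓝[>] (0:ℝ)) atBot :=
              (tendsto_const_mul_atBot_of_neg ha).2 tendsto_inv_nhdsGT_zero
            have h2' : Tendsto (fun ε : ℝ => (x / t - ur) * ε⁻¹ + (-1)) (𝓝[>] (0:ℝ)) atBot :=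
              tendsto_atBot_add_const_right _ (-1) h1'
            have h3' := Real.tendsto_exp_atBot.comp h2'
            have h4' : Tendsto (fun ε : ℝ => Real.exp ((x / t - (ur + ε)) / ε))
                (𝓝[>] (0:ℝ)) (𝓝 0) := by
              refine h3'.congr' ?_
              filter_upwards [self_mem_nhdsWithin] with ε hε
              have hε' : (ε : ℝ) ≠ 0 := ne_of_gt hε
              have : (x / t - ur) * ε⁻¹ + (-1) = (x / t - (ur + ε)) / ε := by
                field_simp
                ring
              simp only [Function.comp_apply, this]
            simpa using h4'.const_mul ρr
          have hδ : (0:ℝ) < (x - ul * t) / t := div_pos (by linarith) ht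
          refine Tendsto.congr' ?_ hT
          filter_upwards [Ioo_mem_nhdsGT_of_mem (Set.mem_Ico.mpr ⟨le_refl 0, hδ⟩)] with ε hε
          obtain ⟨hε0, hεδ⟩ := hε
          have hεt : ε * t < x - ul * t := (lt_div_iff₀ ht).mp hεδ
          rw [if_neg (not_lt.2 h.le), if_neg (by nlinarith), if_pos (by nlinarith)]
        · exact absurd h' h2
        · rw [if_neg (not_lt.2 h.le), if_neg (not_lt.2 h'.le)]
          have hδ : (0:ℝ) < (x - ur * t) / t := div_pos (by linarith) ht
          refine Tendsto.congr' ?_ tendsto_const_nhds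
          filter_upwards [Ioo_mem_nhdsGT_of_mem (Set.mem_Ico.mpr ⟨le_refl 0, hδ⟩)] with ε hε
          obtain ⟨hε0, hεδ⟩ := hε
          have hεt : ε * t < x - ur * t := (lt_div_iff₀ ht).mp hεδ
          rw [if_neg (not_lt.2 h.le), if_neg (by nlinarith), if_neg (by nlinarith)]
end
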